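/- For all n ≥ 2, the designs X_n generated by the greedy-packing algorithm satisfy CR(X_n) ≤ 2·CR*_n, where CR*_n = min over all n-point designs in X of their fill distance. -/

import Mathlib

open Metric Set MeasureTheory

/-- Distance from a point `x` to the nearest point of the design `D`. -/
noncomputable def minDist {E : Type*} [NormedAddCommGroup E] (D : Finset E) (x : E) : ℝ :=
  sInf ((fun p => dist x p) '' (D : Set E))

/-- Fill distance (covering radius) of the design `D` for the set `A`:
`CR_A(D) = sup_{x ∈ A} min_{p ∈ D} ‖x - p‖`. -/
noncomputable def fillDist {E : Type*} [NormedAddCommGroup E] (A : Set E) (D : Finset E) : ℝ :=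
  sSup ((fun x => minDist D x) '' A)

/-- Separation radius of the design `D`:
`SR(D) = (1/2) min_{p ≠ q ∈ D} ‖p - q‖`. -/
noncomputable def sepRad {E : Type*} [NormedAddCommGroup E] (D : Finset E) : ℝ :=
  (1 / 2) * sInf ((fun p : E × E => dist p.1 p.2) '' {p | p.1 ∈ D ∧ p.2 ∈ D ∧ p.1 ≠ p.2})

/-- Mesh-ratio of the design `D` for the set `A`: `MR(D) = CR_A(D) / SR(D)`. -/
noncomputable def meshRatio {E : Type*} [NormedAddCommGroup E] (A : Set E) (D : Finset E) : ℝ :=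
  fillDist A D / sepRad D

/-- The nested design consisting of the first `n` points of the sequence `x`. -/
noncomputable def design {E : Type*} (x : ℕ → E) (n : ℕ) : Finset E :=
  letI := Classical.decEq E
  (Finset.range n).image x

/-!
The `n + 1` points `x₀, …, xₙ` of the greedy sequence lie in `S`, so each is within `CR(D)` of
one of the `n` points of a competing design `D`; by pigeonhole two of them, `xᵢ` and `xⱼ` with
`i < j`, share that point and are at distance at most `2 CR(D)`. Since `xⱼ` was a farthest point
of `S` from `Xⱼ`, `CR(Xₙ) ≤ CR(Xⱼ) = dist(xⱼ, Xⱼ) ≤ dist(xⱼ, xᵢ)`.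
-/

section FillDistance

variable {E : Type*} [NormedAddCommGroup E] {S : Set E} {D D' : Finset E}

lemma bddBelow_image_dist (D : Finset E) (x : E) :
    BddBelow ((fun p => dist x p) '' (D : Set E)) :=
  ⟨0, by rintro r ⟨p, -, rfl⟩; exact dist_nonneg⟩

lemma minDist_nonneg (D : Finset E) (x : E) : 0 ≤ minDist D x :=
  Real.sInf_nonneg (by rintro r ⟨p, -, rfl⟩; exact dist_nonneg)

lemma minDist_le_dist {p : E} (hp : p ∈ D) (x : E) : minDist D x ≤ dist x p :=
  csInf_le (bddBelow_image_dist D x) ⟨p, hp, rfl⟩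

lemma exists_mem_minDist_eq (hD : D.Nonempty) (x : E) : ∃ p ∈ D, minDist D x = dist x p := by
  obtain ⟨p, hp, hpx⟩ := ((Finset.coe_nonempty.mpr hD).image (fun p => dist x p)).csInf_mem
    (D.finite_toSet.image _)
  exact ⟨p, hp, hpx.symm⟩

lemma minDist_anti (h : D ⊆ D') (hD : D.Nonempty) (x : E) : minDist D' x ≤ minDist D x :=
  csInf_le_csInf (bddBelow_image_dist D' x) ((Finset.coe_nonempty.mpr hD).image _)
    (image_mono (Finset.coe_subset.mpr h))

lemma bddAbove_image_minDist (hS : Bornology.IsBounded S) (hD : D.Nonempty) :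
    BddAbove ((fun y => minDist D y) '' S) := by
  obtain ⟨p, hp⟩ := hD
  obtain ⟨r, hr⟩ := hS.subset_closedBall p
  exact ⟨r, by rintro v ⟨y, hy, rfl⟩; exact (minDist_le_dist hp y).trans (hr hy)⟩

lemma minDist_le_fillDist (hS : Bornology.IsBounded S) (hD : D.Nonempty) {y : E} (hy : y ∈ S) :
    minDist D y ≤ fillDist S D :=
  le_csSup (bddAbove_image_minDist hS hD) ⟨y, hy, rfl⟩

lemma fillDist_nonneg (S : Set E) (D : Finset E) : 0 ≤ fillDist S D :=
  Real.sSup_nonneg (by rintro v ⟨y, -, rfl⟩; exact minDist_nonneg D y)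

lemma fillDist_anti (hS : Bornology.IsBounded S) (h : D ⊆ D') (hD : D.Nonempty) :
    fillDist S D' ≤ fillDist S D := by
  refine Real.sSup_le ?_ (fillDist_nonneg S D)
  rintro v ⟨y, hy, rfl⟩
  exact (minDist_anti h hD y).trans (minDist_le_fillDist hS hD hy)

lemma exists_mem_dist_le_fillDist (hS : Bornology.IsBounded S) (hD : D.Nonempty) {y : E}
    (hy : y ∈ S) : ∃ p ∈ D, dist y p ≤ fillDist S D := by
  obtain ⟨p, hp, hpy⟩ := exists_mem_minDist_eq hD y
  exact ⟨p, hp, hpy ▸ minDist_le_fillDist hS hD hy⟩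

lemma exists_lt_dist_le_two_mul_fillDist (hS : Bornology.IsBounded S) (hD : D.Nonempty)
    {x : ℕ → E} (hx : ∀ i, x i ∈ S) :
    ∃ i j, i < j ∧ j ≤ D.card ∧ dist (x j) (x i) ≤ 2 * fillDist S D := by
  choose p hpD hpx using fun i => exists_mem_dist_le_fillDist hS hD (hx i)
  have hcard : D.card < (Finset.range (D.card + 1)).card := by simp
  obtain ⟨i, hi, j, hj, hij, hpij⟩ :=
    Finset.exists_ne_map_eq_of_card_lt_of_maps_to hcard (fun i _ => hpD i)
  have hclose : dist (x j) (x i) ≤ 2 * fillDist S D :=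
    calc dist (x j) (x i) ≤ dist (x j) (p j) + dist (x i) (p i) := hpij ▸ dist_triangle_right ..
      _ ≤ 2 * fillDist S D := by linarith [hpx i, hpx j]
  rw [Finset.mem_range, Nat.lt_succ_iff] at hi hj
  rcases hij.lt_or_gt with hlt | hgt
  · exact ⟨i, j, hlt, hj, hclose⟩
  · exact ⟨j, i, hgt, hi, dist_comm (x i) (x j) ▸ hclose⟩

end FillDistance

section Design

variable {E : Type*} {x : ℕ → E} {i m n : ℕ}

lemma mem_design (h : i < n) : x i ∈ design x n := by
  classical
  unfold design
  exact Finset.mem_image_of_mem x (Finset.mem_range.mpr h)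

lemma design_mono (h : m ≤ n) : design x m ⊆ design x n := by
  classical
  unfold design
  exact Finset.image_subset_image (Finset.range_mono h)

lemma fillDist_design_le_dist [NormedAddCommGroup E] {S : Set E} (hS : Bornology.IsBounded S)
    {j : ℕ} (hgreedy : minDist (design x j) (x j) = fillDist S (design x j))
    (hij : i < j) (hjn : j ≤ n) : fillDist S (design x n) ≤ dist (x j) (x i) :=
  calc fillDist S (design x n) ≤ fillDist S (design x j) :=
        fillDist_anti hS (design_mono hjn) ⟨x i, mem_design hij⟩
    _ = minDist (design x j) (x j) := hgreedy.symm
    _ ≤ dist (x j) (x i) := minDist_le_dist (mem_design hij) _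

end Design

theorem statement6_general
    {E : Type*} [NormedAddCommGroup E]
    (S : Set E) (hS : IsCompact S)
    (x : ℕ → E) (hx0 : x 0 ∈ S)
    (hgreedy : ∀ k : ℕ, 1 ≤ k →
      x k ∈ S ∧ minDist (design x k) (x k) = fillDist S (design x k))
    (n : ℕ) (hn : 2 ≤ n) :
    ∀ D' : Finset E, ↑D' ⊆ S → D'.card = n → fillDist S (design x n) ≤ 2 * fillDist S D' := by
  intro D' _ hcard
  have hxS : ∀ i, x i ∈ S
    | 0 => hx0
    | k + 1 => (hgreedy (k + 1) k.succ_pos).1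
  obtain ⟨i, j, hij, hjn, hclose⟩ := exists_lt_dist_le_two_mul_fillDist hS.isBounded
    (Finset.card_pos.mp (by omega : 0 < D'.card)) hxS
  exact (fillDist_design_le_dist hS.isBounded (hgreedy j (by omega)).2 hij (hcard ▸ hjn)).trans
    hclose

/-- For all `n ≥ 2`, the designs `Xₙ` generated by the greedy-packing
algorithm satisfy `CR(Xₙ) ≤ 2·CR*ₙ`, where `CR*ₙ` is the minimal fill distance over all
`n`-point designs in `S` (expressed as: `CR(Xₙ) ≤ 2·CR(D')` for every `n`-point design `D'`). -/
theorem statement6 {d : ℕ} (hd : 1 ≤ d)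
    {E : Type*} [NormedAddCommGroup E] [NormedSpace ℝ E] [FiniteDimensional ℝ E]
    (hdim : Module.finrank ℝ E = d)
    (S : Set E) (hS : IsCompact S)
    (x : ℕ → E) (hinj : Function.Injective x) (hx0 : x 0 ∈ S)
    (hgreedy : ∀ k : ℕ, 1 ≤ k →
      x k ∈ S ∧ minDist (design x k) (x k) = fillDist S (design x k))
    (n : ℕ) (hn : 2 ≤ n) :
    ∀ D' : Finset E, ↑D' ⊆ S → D'.card = n → fillDist S (design x n) ≤ 2 * fillDist S D' :=
  statement6_general S hS x hx0 hgreedy n hn
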